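/- arXiv:1705.06996 — 3 statements merged into one kernel-verified Lean document; each statement's English description precedes it below -/
import Mathlib

section
/- If a polytope P with d vertices can be written as the image under a linear map π of a polytope Q with f facets, then f ≥ log₂ d. -/
/-!
The fibre `{x ∈ Q | π x = p}` over a vertex `p` of `P` is a nonempty face of `Q`: it is the set of
maximizers over `Q` of `ℓ ∘ π`, where `ℓ` is a linear functional exposing `p`. Distinct vertices have
disjoint fibres. A nonempty face of a polytope is determined by the facets containing it: by
Fourier–Motzkin elimination `Q` is the solution set of a finite system of linear inequalities,
which may be taken irredundant; a nonempty face is cut out by the inequalities tight on it, and each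
inequality that is not tight on all of `Q` is tight exactly on a facet. So the vertices of `P` inject
into the sets of facets of `Q`, and `d ≤ 2 ^ f`.
-/

open Set

/-- `P` is a polytope: the convex hull of a finite set of points. -/
def IsPolytope {k : ℕ} (P : Set (Fin k → ℝ)) : Prop :=
  ∃ s : Finset (Fin k → ℝ), P = convexHull ℝ (s : Set (Fin k → ℝ))

/-- `F` is a face of `Q`: either `Q` itself or the set of maximizers
of some linear functional over `Q`. -/
def IsFaceOf {n : ℕ} (Q F : Set (Fin n → ℝ)) : Prop :=
  F = Q ∨ ∃ c : Fin n → ℝ, F = {x ∈ Q | ∀ y ∈ Q, ∑ i, c i * y i ≤ ∑ i, c i * x i}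

/-- A facet of `Q` is a nonempty proper face that is maximal among proper faces. -/
def IsFacetOf {n : ℕ} (Q F : Set (Fin n → ℝ)) : Prop :=
  IsFaceOf Q F ∧ F.Nonempty ∧ F ≠ Q ∧
    ∀ F' : Set (Fin n → ℝ), IsFaceOf Q F' → F ⊆ F' → F' = F ∨ F' = Q

open Topology

lemma Finset.exists_forall_le_forall_le {α β : Type*} (A : Finset α) (B : Finset β)
    (f : α → ℝ) (g : β → ℝ) (h : ∀ a ∈ A, ∀ b ∈ B, f a ≤ g b) :
    ∃ t, (∀ a ∈ A, f a ≤ t) ∧ ∀ b ∈ B, t ≤ g b := by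
  by_cases hA : A.Nonempty
  · exact ⟨A.sup' hA f, fun a ha => A.le_sup' f ha, fun b hb => A.sup'_le hA f (h · · b hb)⟩
  by_cases hB : B.Nonempty
  · exact ⟨B.inf' hB g, fun a ha => absurd ⟨a, ha⟩ hA, fun b hb => B.inf'_le g hb⟩
  exact ⟨0, fun a ha => absurd ⟨a, ha⟩ hA, fun b hb => absurd ⟨b, hb⟩ hB⟩

lemma Finset.mem_convexHull_iff_exists_fintype {E : Type*} [AddCommGroup E] [Module ℝ E]
    {s : Finset E} {x : E} :
    x ∈ convexHull ℝ (s : Set E) ↔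
      ∃ w : s → ℝ, (∀ y, 0 ≤ w y) ∧ ∑ y, w y = 1 ∧ ∑ y, w y • (y : E) = x := by
  constructor
  · rw [Finset.mem_convexHull']
    rintro ⟨w, hw₀, hw₁, hx⟩
    exact ⟨w ∘ (↑), fun y => hw₀ y y.2, (Finset.sum_attach s w).trans hw₁,
      (Finset.sum_attach s (fun y => w y • y)).trans hx⟩
  · rintro ⟨w, hw₀, hw₁, hx⟩
    exact mem_convexHull_of_exists_fintype w (fun y : s => (y : E)) hw₀ hw₁ (fun y => y.2) hx

namespace LinearSystem

variable {ι : Type*} [Fintype ι]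

def solutions (S : Finset ((ι → ℝ) × ℝ)) : Set (ι → ℝ) := {x | ∀ p ∈ S, p.1 ⬝ᵥ x ≤ p.2}

lemma convex_solutions (S : Finset ((ι → ℝ) × ℝ)) : Convex ℝ (solutions S) := by
  intro x hx y hy a b ha hb hab p hp
  rw [dotProduct_add, dotProduct_smul, dotProduct_smul, smul_eq_mul, smul_eq_mul]
  have hxp : p.1 ⬝ᵥ x ≤ p.2 := hx p hp
  have hyp : p.1 ⬝ᵥ y ≤ p.2 := hy p hp
  calc a * p.1 ⬝ᵥ x + b * p.1 ⬝ᵥ y ≤ a * p.2 + b * p.2 := by gcongr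
    _ = p.2 := by rw [← add_mul, hab, one_mul]

lemma solutions_anti {S T : Finset ((ι → ℝ) × ℝ)} (h : S ⊆ T) : solutions T ⊆ solutions S :=
  fun _ hx p hp => hx p (h hp)

lemma solutions_union (S T : Finset ((ι → ℝ) × ℝ)) :
    solutions (S ∪ T) = solutions S ∩ solutions T := by
  ext x
  simp [solutions, or_imp, forall_and]

/-- Fourier–Motzkin elimination of the variable `v`. -/
noncomputable def elim (v : ι) (S : Finset ((ι → ℝ) × ℝ)) : Finset ((ι → ℝ) × ℝ) :=
  S.filter (·.1 v = 0) ∪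
    ((S ×ˢ S).filter (fun q => 0 < q.1.1 v ∧ q.2.1 v < 0)).image
      (fun q => (-q.2.1 v) • q.1 + q.1.1 v • q.2)

lemma apply_eq_zero_of_mem_elim {v : ι} {S : Finset ((ι → ℝ) × ℝ)} {p : (ι → ℝ) × ℝ}
    (hp : p ∈ elim v S) : p.1 v = 0 := by
  simp only [elim, Finset.mem_union, Finset.mem_filter, Finset.mem_image] at hp
  rcases hp with ⟨-, h⟩ | ⟨q, -, rfl⟩
  · exact h
  · simp only [Prod.fst_add, Prod.smul_fst, Pi.add_apply, Pi.smul_apply, smul_eq_mul]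
    ring

lemma apply_eq_zero_of_mem_elim_of_forall {v w : ι} {S : Finset ((ι → ℝ) × ℝ)}
    (h : ∀ p ∈ S, p.1 w = 0) {p : (ι → ℝ) × ℝ} (hp : p ∈ elim v S) : p.1 w = 0 := by
  simp only [elim, Finset.mem_union, Finset.mem_filter, Finset.mem_image,
    Finset.mem_product] at hp
  rcases hp with ⟨hpS, -⟩ | ⟨q, ⟨⟨hq₁, hq₂⟩, -⟩, rfl⟩
  · exact h p hpS
  · simp [h _ hq₁, h _ hq₂]

lemma apply_eq_zero_of_mem_foldr_elim {L : List ι} {S : Finset ((ι → ℝ) × ℝ)}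
    {p : (ι → ℝ) × ℝ} (hp : p ∈ L.foldr elim S) {v : ι} (hv : v ∈ L) : p.1 v = 0 := by
  induction L generalizing p with
  | nil => simp at hv
  | cons w L ih =>
    rcases List.mem_cons.1 hv with rfl | hv
    · exact apply_eq_zero_of_mem_elim hp
    · exact apply_eq_zero_of_mem_elim_of_forall (fun q hq => ih hq hv) hp

section DecidableEq

variable [DecidableEq ι]

lemma dotProduct_add_smul_single (a x : ι → ℝ) (v : ι) (t : ℝ) :
    a ⬝ᵥ (x + t • Pi.single v 1) = a ⬝ᵥ x + t * a v := by
  rw [dotProduct_add, dotProduct_smul, dotProduct_single, mul_one, smul_eq_mul]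

lemma exists_add_smul_single_mem_solutions {v : ι} {S : Finset ((ι → ℝ) × ℝ)} {x : ι → ℝ}
    (hx : x ∈ solutions (elim v S)) : ∃ t : ℝ, x + t • Pi.single v 1 ∈ solutions S := by
  -- the bound on `t` imposed by the inequality `p`, from above if `0 < p.1 v`, else from below
  set β : (ι → ℝ) × ℝ → ℝ := fun p => (p.2 - p.1 ⬝ᵥ x) / p.1 v
  have hβ : ∀ q ∈ S.filter (·.1 v < 0), ∀ p ∈ S.filter (0 < ·.1 v), β q ≤ β p := by
    simp only [Finset.mem_filter, and_imp]
    intro q hq hqv p hp hpv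
    have := hx ((-q.1 v) • p + p.1 v • q) (Finset.mem_union_right _
      (Finset.mem_image.2 ⟨(p, q), by simp [hp, hq, hpv, hqv], rfl⟩))
    simp only [Prod.fst_add, Prod.smul_fst, Prod.snd_add, Prod.smul_snd, add_dotProduct,
      smul_dotProduct, smul_eq_mul] at this
    rw [div_le_iff_of_neg hqv, div_mul_eq_mul_div, div_le_iff₀ hpv]
    nlinarith
  obtain ⟨t, hlow, hupp⟩ := Finset.exists_forall_le_forall_le _ _ β β hβ
  refine ⟨t, fun p hp => ?_⟩
  rw [dotProduct_add_smul_single]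
  rcases lt_trichotomy (p.1 v) 0 with hv | hv | hv
  · have := hlow p (Finset.mem_filter.2 ⟨hp, hv⟩)
    rw [div_le_iff_of_neg hv] at this
    linarith
  · rw [hv, mul_zero, add_zero]
    exact hx p (Finset.mem_union_left _ (Finset.mem_filter.2 ⟨hp, hv⟩))
  · have := hupp p (Finset.mem_filter.2 ⟨hp, hv⟩)
    rw [le_div_iff₀ hv] at this
    linarith

theorem mem_solutions_elim {v : ι} {S : Finset ((ι → ℝ) × ℝ)} {x : ι → ℝ} :
    x ∈ solutions (elim v S) ↔ ∃ t : ℝ, x + t • Pi.single v 1 ∈ solutions S := by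
  refine ⟨exists_add_smul_single_mem_solutions, fun ⟨t, ht⟩ p hp => ?_⟩
  have hxp : p.1 ⬝ᵥ (x + t • Pi.single v 1) = p.1 ⬝ᵥ x := by
    rw [dotProduct_add_smul_single, apply_eq_zero_of_mem_elim hp, mul_zero, add_zero]
  rw [← hxp]
  simp only [elim, Finset.mem_union, Finset.mem_filter, Finset.mem_image,
    Finset.mem_product] at hp
  rcases hp with ⟨hpS, -⟩ | ⟨q, ⟨⟨hq₁, hq₂⟩, hpos, hneg⟩, rfl⟩
  · exact ht p hpS
  · have h₁ := ht _ hq₁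
    have h₂ := ht _ hq₂
    simp only [Prod.fst_add, Prod.smul_fst, Prod.snd_add, Prod.smul_snd, add_dotProduct,
      smul_dotProduct, smul_eq_mul]
    nlinarith

end DecidableEq

theorem mem_solutions_foldr_elim {L : List ι} {S : Finset ((ι → ℝ) × ℝ)} {x : ι → ℝ} :
    x ∈ solutions (L.foldr elim S) ↔ ∃ y ∈ solutions S, ∀ w ∉ L, y w = x w := by
  classical
  induction L generalizing x with
  | nil =>
    exact ⟨fun hx => ⟨x, hx, fun _ _ => rfl⟩, fun ⟨y, hy, hyx⟩ => funext (hyx · (by simp)) ▸ hy⟩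
  | cons v L ih =>
    rw [List.foldr_cons, mem_solutions_elim]
    constructor
    · rintro ⟨t, ht⟩
      obtain ⟨y, hy, hyx⟩ := ih.1 ht
      refine ⟨y, hy, fun w hw => ?_⟩
      rw [List.mem_cons, not_or] at hw
      simp [hyx w hw.2, hw.1]
    · rintro ⟨y, hy, hyx⟩
      refine ⟨y v - x v, ih.2 ⟨y, hy, fun w hw => ?_⟩⟩
      by_cases hwv : w = v
      · subst hwv; simp
      · simp [hyx w (by simp [hwv, hw]), hwv]

theorem exists_solutions_eq_setOf_exists_sumElim {κ : Type*} [Fintype κ]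
    (S : Finset (((κ ⊕ ι) → ℝ) × ℝ)) :
    ∃ T : Finset ((ι → ℝ) × ℝ), solutions T = {x | ∃ w : κ → ℝ, Sum.elim w x ∈ solutions S} := by
  classical
  set L : List (κ ⊕ ι) := (Finset.univ : Finset κ).toList.map Sum.inl
  have hL : ∀ u, u ∈ L ↔ u.isLeft := by rintro (i | j) <;> simp [L]
  have hdot : ∀ p ∈ L.foldr elim S, ∀ z : κ ⊕ ι → ℝ,
      p.1 ⬝ᵥ z = (p.1 ∘ Sum.inr) ⬝ᵥ (z ∘ Sum.inr) := by
    intro p hp z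
    have hinl (i : κ) : p.1 (.inl i) = 0 := apply_eq_zero_of_mem_foldr_elim hp ((hL _).2 rfl)
    simp [dotProduct, Fintype.sum_sum_type, hinl]
  refine ⟨(L.foldr elim S).image fun p => (p.1 ∘ Sum.inr, p.2), Set.ext fun x => ?_⟩
  calc x ∈ solutions ((L.foldr elim S).image fun p => (p.1 ∘ Sum.inr, p.2))
      ↔ Sum.elim (0 : κ → ℝ) x ∈ solutions (L.foldr elim S) := by
        simp only [solutions, Set.mem_ofPred_eq, Finset.forall_mem_image]
        exact forall₂_congr fun p hp => by rw [hdot p hp]; rfl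
    _ ↔ ∃ w : κ → ℝ, Sum.elim w x ∈ solutions S := by
        rw [mem_solutions_foldr_elim]
        constructor
        · rintro ⟨y, hy, hyx⟩
          refine ⟨y ∘ Sum.inl, ?_⟩
          convert hy using 1
          ext (i | j)
          · rfl
          · exact (hyx (.inr j) (by simp [hL])).symm
        · rintro ⟨w, hw⟩
          exact ⟨_, hw, fun u hu => by cases u <;> simp_all⟩

open scoped Pointwise in
lemma mem_solutions_union_neg {T : Finset ((ι → ℝ) × ℝ)} {x : ι → ℝ} :
    x ∈ solutions (T ∪ -T) ↔ ∀ p ∈ T, p.1 ⬝ᵥ x = p.2 := by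
  simp only [solutions, Set.mem_ofPred_eq, Finset.mem_union, Finset.mem_neg, or_imp, forall_and,
    forall_exists_index, and_imp, forall_apply_eq_imp_iff₂, Prod.fst_neg, Prod.snd_neg,
    neg_dotProduct, neg_le_neg_iff]
  exact ⟨fun h p hp => le_antisymm (h.1 p hp) (h.2 p hp),
    fun h => ⟨fun p hp => (h p hp).le, fun p hp => (h p hp).ge⟩⟩

open scoped Pointwise in
theorem exists_solutions_eq_convexHull (s : Finset (ι → ℝ)) :
    ∃ T : Finset ((ι → ℝ) × ℝ), solutions T = convexHull ℝ ↑s := by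
  classical
  let E : Finset (((s ⊕ ι) → ℝ) × ℝ) := insert (Sum.elim (1 : s → ℝ) (0 : ι → ℝ), 1)
    (Finset.univ.image fun j => (Sum.elim (fun y => (y : ι → ℝ) j) (-Pi.single j 1), 0))
  let S : Finset (((s ⊕ ι) → ℝ) × ℝ) :=
    Finset.univ.image (fun y => (Sum.elim (-Pi.single y 1) (0 : ι → ℝ), 0)) ∪ (E ∪ -E)
  have hS (w : s → ℝ) (x : ι → ℝ) : Sum.elim w x ∈ solutions S ↔
      (∀ y, 0 ≤ w y) ∧ ∑ y, w y = 1 ∧ ∑ y, w y • (y : ι → ℝ) = x := by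
    rw [solutions_union, Set.mem_inter_iff, mem_solutions_union_neg]
    simp only [solutions, Set.mem_ofPred_eq, E, Finset.forall_mem_insert, Finset.forall_mem_image,
      Finset.mem_univ, forall_const, sumElim_dotProduct_sumElim, neg_dotProduct,
      single_dotProduct, zero_dotProduct, one_dotProduct]
    simp [funext_iff, Finset.sum_apply, add_neg_eq_zero, dotProduct, mul_comm]
  obtain ⟨T, hT⟩ := exists_solutions_eq_setOf_exists_sumElim S
  refine ⟨T, hT.trans (Set.ext fun x => ?_)⟩
  simp only [Set.mem_ofPred_eq, hS, Finset.mem_convexHull_iff_exists_fintype]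

open Classical in
noncomputable def tight (S : Finset ((ι → ℝ) × ℝ)) (F : Set (ι → ℝ)) : Finset ((ι → ℝ) × ℝ) :=
  S.filter fun p => ∀ x ∈ F, p.1 ⬝ᵥ x = p.2

lemma mem_tight {S : Finset ((ι → ℝ) × ℝ)} {F : Set (ι → ℝ)} {p : (ι → ℝ) × ℝ} :
    p ∈ tight S F ↔ p ∈ S ∧ ∀ x ∈ F, p.1 ⬝ᵥ x = p.2 := by
  classical
  simp [tight]

lemma tight_anti (S : Finset ((ι → ℝ) × ℝ)) {F G : Set (ι → ℝ)} (h : F ⊆ G) :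
    tight S G ⊆ tight S F := fun _ hp =>
  mem_tight.2 ⟨(mem_tight.1 hp).1, fun x hx => (mem_tight.1 hp).2 x (h hx)⟩

lemma exists_mem_forall_lt {F : Set (ι → ℝ)} (hF : Convex ℝ F) (hne : F.Nonempty)
    (K : Finset ((ι → ℝ) × ℝ)) (hK : ∀ p ∈ K, (∀ x ∈ F, p.1 ⬝ᵥ x ≤ p.2) ∧ ∃ x ∈ F, p.1 ⬝ᵥ x < p.2) :
    ∃ y ∈ F, ∀ p ∈ K, p.1 ⬝ᵥ y < p.2 := by
  classical
  induction K using Finset.induction_on with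
  | empty =>
    obtain ⟨y, hy⟩ := hne
    exact ⟨y, hy, by simp⟩
  | insert q K _ ih =>
    rw [Finset.forall_mem_insert] at hK
    obtain ⟨y, hyF, hy⟩ := ih hK.2
    obtain ⟨w, hwF, hw⟩ := hK.1.2
    -- at the midpoint of `y` and `w`, every inequality strict at one of them is strict
    have hmid (p : (ι → ℝ) × ℝ) : p.1 ⬝ᵥ ((1 / 2 : ℝ) • y + (1 / 2 : ℝ) • w) =
        (p.1 ⬝ᵥ y + p.1 ⬝ᵥ w) / 2 := by
      rw [dotProduct_add, dotProduct_smul, dotProduct_smul, smul_eq_mul, smul_eq_mul]; ring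
    refine ⟨(1 / 2 : ℝ) • y + (1 / 2 : ℝ) • w, hF hyF hwF (by norm_num) (by norm_num) (by norm_num),
      ?_⟩
    simp only [Finset.forall_mem_insert, hmid]
    refine ⟨by linarith [hK.1.1 y hyF], fun p hp => ?_⟩
    linarith [hy p hp, (hK.2 p hp).1 w hwF]

lemma exists_mem_forall_lt_of_notMem_tight {S : Finset ((ι → ℝ) × ℝ)} {F : Set (ι → ℝ)}
    (hF : Convex ℝ F) (hne : F.Nonempty) (hFS : F ⊆ solutions S) :
    ∃ y ∈ F, ∀ p ∈ S, p ∉ tight S F → p.1 ⬝ᵥ y < p.2 := by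
  classical
  have hK : ∀ p ∈ S.filter (· ∉ tight S F),
      (∀ x ∈ F, p.1 ⬝ᵥ x ≤ p.2) ∧ ∃ x ∈ F, p.1 ⬝ᵥ x < p.2 := by
    intro p hp
    obtain ⟨hpS, hpF⟩ := Finset.mem_filter.1 hp
    simp only [mem_tight, hpS, true_and] at hpF
    push Not at hpF
    obtain ⟨x, hxF, hx⟩ := hpF
    exact ⟨fun x hx => hFS hx p hpS, x, hxF, (hFS hxF p hpS).lt_of_ne hx⟩
  obtain ⟨y, hyF, hy⟩ := exists_mem_forall_lt hF hne _ hK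
  exact ⟨y, hyF, fun p hp hpF => hy p (Finset.mem_filter.2 ⟨hp, hpF⟩)⟩

lemma exists_pos_add_smul_sub_mem_solutions {S : Finset ((ι → ℝ) × ℝ)} {x y : ι → ℝ}
    (hy : y ∈ solutions S) (hxy : ∀ p ∈ S, p.1 ⬝ᵥ y = p.2 → p.1 ⬝ᵥ x = p.2) :
    ∃ ε : ℝ, 0 < ε ∧ y + ε • (y - x) ∈ solutions S := by
  have hdot (p : (ι → ℝ) × ℝ) (ε : ℝ) :
      p.1 ⬝ᵥ (y + ε • (y - x)) = p.1 ⬝ᵥ y + ε * (p.1 ⬝ᵥ y - p.1 ⬝ᵥ x) := by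
    rw [dotProduct_add, dotProduct_smul, dotProduct_sub, smul_eq_mul]
  have hev : ∀ᶠ ε in 𝓝 (0 : ℝ), y + ε • (y - x) ∈ solutions S := by
    simp only [solutions, Set.mem_ofPred_eq, hdot, Filter.eventually_all_finset]
    intro p hp
    rcases (hy p hp).lt_or_eq with hlt | heq
    · have hcont : ContinuousAt (fun ε : ℝ => p.1 ⬝ᵥ y + ε * (p.1 ⬝ᵥ y - p.1 ⬝ᵥ x)) 0 := by
        fun_prop
      exact (hcont.eventually_lt continuousAt_const (by simpa using hlt)).mono fun _ h => h.le
    · exact Filter.Eventually.of_forall fun ε => by rw [heq, hxy p hp heq]; simp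
  obtain ⟨ε, hε, hεpos⟩ := ((hev.filter_mono nhdsWithin_le_nhds).and
    (self_mem_nhdsWithin : Set.Ioi (0 : ℝ) ∈ 𝓝[>] 0)).exists
  exact ⟨ε, hεpos, hε⟩

def Irredundant (S : Finset ((ι → ℝ) × ℝ)) : Prop :=
  ∀ p ∈ S, solutions (S.erase p) ≠ solutions S

lemma exists_irredundant_subset (S : Finset ((ι → ℝ) × ℝ)) :
    ∃ T ⊆ S, solutions T = solutions S ∧ Irredundant T := by
  classical
  induction S using Finset.strongInduction with
  | _ S ih =>
    by_cases h : Irredundant S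
    · exact ⟨S, subset_rfl, rfl, h⟩
    obtain ⟨p, hp, hpS⟩ : ∃ p ∈ S, solutions (S.erase p) = solutions S := by
      simpa [Irredundant] using h
    obtain ⟨T, hTS, hT, hTirr⟩ := ih _ (Finset.erase_ssubset hp)
    exact ⟨T, hTS.trans (Finset.erase_subset p S), hT.trans hpS, hTirr⟩

lemma Irredundant.exists_lt_forall_le {S : Finset ((ι → ℝ) × ℝ)} (hS : Irredundant S)
    {p : (ι → ℝ) × ℝ} (hp : p ∈ S) :
    ∃ x, p.2 < p.1 ⬝ᵥ x ∧ ∀ q ∈ S, q ≠ p → q.1 ⬝ᵥ x ≤ q.2 := by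
  classical
  obtain ⟨x, hxp, hxS⟩ := Set.exists_of_ssubset
    ((solutions_anti (Finset.erase_subset p S)).ssubset_of_ne (hS p hp).symm)
  refine ⟨x, ?_, fun q hq hqp => hxp q (Finset.mem_erase.2 ⟨hqp, hq⟩)⟩
  by_contra! hle
  exact hxS fun q hq => if hqp : q = p then hqp ▸ hle else hxp q (Finset.mem_erase.2 ⟨hqp, hq⟩)

lemma Irredundant.exists_mem_eq_forall_lt {S : Finset ((ι → ℝ) × ℝ)} (hS : Irredundant S)
    (hne : (solutions S).Nonempty) {j : (ι → ℝ) × ℝ} (hj : j ∈ S)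
    (hjS : j ∉ tight S (solutions S)) :
    ∃ z ∈ solutions S, j.1 ⬝ᵥ z = j.2 ∧
      ∀ p ∈ S, p ≠ j → p ∉ tight S (solutions S) → p.1 ⬝ᵥ z < p.2 := by
  obtain ⟨y, hyS, hy⟩ :=
    exists_mem_forall_lt_of_notMem_tight (convex_solutions S) hne subset_rfl
  obtain ⟨v, hjv, hv⟩ := hS.exists_lt_forall_le hj
  have hjy := hy j hj hjS
  -- move from `y` towards `v` until the inequality `j` becomes tight
  set t := (j.2 - j.1 ⬝ᵥ y) / (j.1 ⬝ᵥ v - j.1 ⬝ᵥ y)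
  have ht₀ : 0 < t := div_pos (by linarith) (by linarith)
  have ht₁ : t < 1 := (div_lt_one (by linarith)).2 (by linarith)
  have hdot (p : (ι → ℝ) × ℝ) :
      p.1 ⬝ᵥ ((1 - t) • y + t • v) = (1 - t) * p.1 ⬝ᵥ y + t * p.1 ⬝ᵥ v := by
    rw [dotProduct_add, dotProduct_smul, dotProduct_smul, smul_eq_mul, smul_eq_mul]
  have hjz : j.1 ⬝ᵥ ((1 - t) • y + t • v) = j.2 := by
    have := div_mul_cancel₀ (j.2 - j.1 ⬝ᵥ y) (sub_pos.2 (hjy.trans hjv)).ne'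
    rw [hdot]
    linarith
  refine ⟨(1 - t) • y + t • v, fun p hp => ?_, hjz, fun p hp hpj hpS => ?_⟩
  · by_cases hpj : p = j
    · exact (hpj ▸ hjz).le
    · rw [hdot]
      nlinarith [hyS p hp, hv p hp hpj]
  · rw [hdot]
    nlinarith [hy p hp hpS, hv p hp hpj]

end LinearSystem

open LinearSystem

section Faces

variable {n : ℕ} {Q F : Set (Fin n → ℝ)}

lemma isFaceOf_iff :
    IsFaceOf Q F ↔ F = Q ∨ ∃ c : Fin n → ℝ, F = {x ∈ Q | ∀ y ∈ Q, c ⬝ᵥ y ≤ c ⬝ᵥ x} :=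
  Iff.rfl

lemma IsFaceOf.subset (h : IsFaceOf Q F) : F ⊆ Q := by
  rcases h with rfl | ⟨c, rfl⟩
  exacts [subset_rfl, fun x hx => hx.1]

lemma IsFaceOf.convex (hQ : Convex ℝ Q) (h : IsFaceOf Q F) : Convex ℝ F := by
  rcases isFaceOf_iff.1 h with rfl | ⟨c, rfl⟩
  · exact hQ
  intro x hx y hy a b ha hb hab
  refine ⟨hQ hx.1 hy.1 ha hb hab, fun z hz => ?_⟩
  rw [dotProduct_add, dotProduct_smul, dotProduct_smul, smul_eq_mul, smul_eq_mul]
  calc c ⬝ᵥ z = a * c ⬝ᵥ z + b * c ⬝ᵥ z := by rw [← add_mul, hab, one_mul]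
    _ ≤ a * c ⬝ᵥ x + b * c ⬝ᵥ y := by gcongr; exacts [hx.2 z hz, hy.2 z hz]

lemma isFaceOf_setOf_dotProduct_eq {a : Fin n → ℝ} {b : ℝ} (hQ : ∀ x ∈ Q, a ⬝ᵥ x ≤ b)
    (hb : ∃ z ∈ Q, a ⬝ᵥ z = b) : IsFaceOf Q {x ∈ Q | a ⬝ᵥ x = b} := by
  obtain ⟨z, hzQ, hz⟩ := hb
  refine isFaceOf_iff.2 (Or.inr ⟨a, Set.ext fun x => and_congr_right fun hx => ?_⟩)
  exact ⟨fun h y hy => h ▸ hQ y hy, fun h => le_antisymm (hQ x hx) (hz ▸ h z hzQ)⟩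

lemma IsFaceOf.eq_setOf_tight {S : Finset ((Fin n → ℝ) × ℝ)} (hQS : Q = solutions S)
    (hF : IsFaceOf Q F) (hne : F.Nonempty) :
    F = {x ∈ Q | ∀ p ∈ tight S F, p.1 ⬝ᵥ x = p.2} := by
  refine Subset.antisymm (fun x hx => ⟨hF.subset hx, fun p hp => (mem_tight.1 hp).2 x hx⟩) ?_
  rintro x ⟨hxQ, hx⟩
  rcases isFaceOf_iff.1 hF with rfl | ⟨c, hFc⟩
  · exact hxQ
  subst hQS
  obtain ⟨y, hyF, hy⟩ := exists_mem_forall_lt_of_notMem_tight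
    (hF.convex (convex_solutions S)) hne hF.subset
  obtain ⟨ε, hε, hzQ⟩ := exists_pos_add_smul_sub_mem_solutions (hF.subset hyF)
    fun p hp hpy => hx p (by_contra fun h => (hy p hp h).ne hpy)
  rw [hFc] at hyF ⊢
  -- `c` is maximal over `Q` at `y`, also compared with `y + ε • (y - x)`, so `c ⬝ᵥ y ≤ c ⬝ᵥ x`
  have hz := hyF.2 _ hzQ
  rw [dotProduct_add, dotProduct_smul, dotProduct_sub, smul_eq_mul] at hz
  refine ⟨hxQ, fun w hw => (hyF.2 w hw).trans ?_⟩
  nlinarith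

lemma IsFaceOf.eq_of_tight_subset {S : Finset ((Fin n → ℝ) × ℝ)} (hQS : Q = solutions S)
    (hF : IsFaceOf Q F) (hne : F.Nonempty) (h : tight S F ⊆ tight S Q) : F = Q :=
  (hF.eq_setOf_tight hQS hne).trans <| Subset.antisymm (sep_subset _ _) fun x hx =>
    ⟨hx, fun _ hp => (mem_tight.1 (h hp)).2 x hx⟩

lemma isFacetOf_setOf_dotProduct_eq {S : Finset ((Fin n → ℝ) × ℝ)} (hQS : Q = solutions S)
    (hS : Irredundant S) (hQ : Q.Nonempty) {j : (Fin n → ℝ) × ℝ} (hj : j ∈ S)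
    (hjQ : j ∉ tight S Q) : IsFacetOf Q {x ∈ Q | j.1 ⬝ᵥ x = j.2} := by
  subst hQS
  obtain ⟨z, hzQ, hzj, hz⟩ := hS.exists_mem_eq_forall_lt hQ hj hjQ
  set G := {x ∈ solutions S | j.1 ⬝ᵥ x = j.2}
  have hzG : z ∈ G := ⟨hzQ, hzj⟩
  have hG : IsFaceOf (solutions S) G :=
    isFaceOf_setOf_dotProduct_eq (fun x hx => hx j hj) ⟨z, hzQ, hzj⟩
  have htight : tight S G ⊆ insert j (tight S (solutions S)) := by
    intro p hp
    obtain ⟨hpS, hpG⟩ := mem_tight.1 hp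
    by_contra! h
    rw [Finset.mem_insert, not_or] at h
    exact (hz p hpS h.1 h.2).ne (hpG z hzG)
  refine ⟨hG, ⟨z, hzG⟩, fun h => hjQ (mem_tight.2 ⟨hj, fun x hx => (h.symm ▸ hx : x ∈ G).2⟩),
    fun F' hF' hGF' => ?_⟩
  by_cases hjF' : j ∈ tight S F'
  · exact .inl (Subset.antisymm (fun x hx => ⟨hF'.subset hx, (mem_tight.1 hjF').2 x hx⟩) hGF')
  · exact .inr (hF'.eq_of_tight_subset rfl ⟨z, hGF' hzG⟩ fun p hp =>
      (Finset.mem_insert.1 (htight (tight_anti S hGF' hp))).resolve_left fun hpj => hjF' (hpj ▸ hp))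

lemma IsFacetOf.exists_eq_setOf_dotProduct_eq {S : Finset ((Fin n → ℝ) × ℝ)}
    (hQS : Q = solutions S) (hF : IsFacetOf Q F) : ∃ p ∈ S, F = {x ∈ Q | p.1 ⬝ᵥ x = p.2} := by
  obtain ⟨hface, hne, hFQ, hmax⟩ := hF
  obtain ⟨p, hpF, hpQ⟩ : ∃ p ∈ tight S F, p ∉ tight S Q := by
    by_contra! h
    exact hFQ (hface.eq_of_tight_subset hQS hne h)
  obtain ⟨hpS, hpF⟩ := mem_tight.1 hpF
  have hFsub : F ⊆ {x ∈ Q | p.1 ⬝ᵥ x = p.2} := fun x hx => ⟨hface.subset hx, hpF x hx⟩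
  obtain ⟨x, hx⟩ := hne
  have hpface : IsFaceOf Q {x ∈ Q | p.1 ⬝ᵥ x = p.2} :=
    isFaceOf_setOf_dotProduct_eq (fun y hy => (hQS ▸ hy : y ∈ solutions S) p hpS) ⟨x, hFsub hx⟩
  refine ⟨p, hpS, ((hmax _ hpface hFsub).resolve_right fun h => hpQ ?_).symm⟩
  exact mem_tight.2 ⟨hpS, fun y hy => (h.symm ▸ hy : y ∈ {x ∈ Q | p.1 ⬝ᵥ x = p.2}).2⟩

lemma IsPolytope.exists_eq_solutions_irredundant (hQ : IsPolytope Q) :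
    ∃ S : Finset ((Fin n → ℝ) × ℝ), Q = solutions S ∧ Irredundant S := by
  obtain ⟨s, rfl⟩ := hQ
  obtain ⟨T, hT⟩ := exists_solutions_eq_convexHull s
  obtain ⟨S, -, hS, hirr⟩ := exists_irredundant_subset T
  exact ⟨S, by rw [hS, hT], hirr⟩

lemma IsPolytope.finite_setOf_isFacetOf (hQ : IsPolytope Q) : {F | IsFacetOf Q F}.Finite := by
  obtain ⟨S, hQS, -⟩ := hQ.exists_eq_solutions_irredundant
  refine (S.finite_toSet.image fun p => {x ∈ Q | p.1 ⬝ᵥ x = p.2}).subset fun F hF => ?_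
  obtain ⟨p, hp, rfl⟩ := IsFacetOf.exists_eq_setOf_dotProduct_eq hQS hF
  exact ⟨p, hp, rfl⟩

theorem IsFaceOf.eq_of_forall_isFacetOf_subset_iff (hQ : IsPolytope Q) {G : Set (Fin n → ℝ)}
    (hF : IsFaceOf Q F) (hFne : F.Nonempty) (hG : IsFaceOf Q G) (hGne : G.Nonempty)
    (h : ∀ T, IsFacetOf Q T → (F ⊆ T ↔ G ⊆ T)) : F = G := by
  obtain ⟨S, hQS, hS⟩ := hQ.exists_eq_solutions_irredundant
  have htight : tight S F = tight S G := by
    ext p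
    by_cases hpQ : p ∈ tight S Q
    · exact iff_of_true (tight_anti S hF.subset hpQ) (tight_anti S hG.subset hpQ)
    by_cases hp : p ∈ S
    · have hfacet := isFacetOf_setOf_dotProduct_eq hQS hS (hFne.mono hF.subset) hp hpQ
      have key {H : Set (Fin n → ℝ)} (hH : IsFaceOf Q H) :
          p ∈ tight S H ↔ H ⊆ {x ∈ Q | p.1 ⬝ᵥ x = p.2} :=
        ⟨fun h x hx => ⟨hH.subset hx, (mem_tight.1 h).2 x hx⟩,
          fun h => mem_tight.2 ⟨hp, fun x hx => (h hx).2⟩⟩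
      rw [key hF, key hG]
      exact h _ hfacet
    · simp [mem_tight, hp]
  calc F = {x ∈ Q | ∀ p ∈ tight S F, p.1 ⬝ᵥ x = p.2} := hF.eq_setOf_tight hQS hFne
    _ = {x ∈ Q | ∀ p ∈ tight S G, p.1 ⬝ᵥ x = p.2} := by rw [htight]
    _ = G := (hG.eq_setOf_tight hQS hGne).symm

end Faces

theorem exists_forall_lt_of_mem_extremePoints_convexHull {E : Type*} [NormedAddCommGroup E]
    [NormedSpace ℝ E] {s : Set E} (hs : s.Finite) {p : E}
    (hp : p ∈ (convexHull ℝ s).extremePoints ℝ) :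
    ∃ ℓ : StrongDual ℝ E, ∀ w ∈ convexHull ℝ s, w ≠ p → ℓ w < ℓ p := by
  have hps : p ∈ s := extremePoints_convexHull_subset hp
  -- `p` is not in the convex hull of the other points, as `convexHull s \ {p}` is convex
  have hpA : p ∉ convexHull ℝ (s \ {p}) := fun h =>
    (convexHull_min (sdiff_subset_sdiff_left (subset_convexHull ℝ s))
      (((convex_convexHull ℝ s).mem_extremePoints_iff_convex_sdiff).1 hp).2 h).2 rfl
  have hs_eq : s = insert p (s \ {p}) := by rw [insert_sdiff_singleton, insert_eq_of_mem hps]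
  rcases (s \ {p}).eq_empty_or_nonempty with hA | hA
  · refine ⟨0, fun w hw hwp => absurd ?_ hwp⟩
    rwa [hs_eq, hA, insert_empty_eq, convexHull_singleton] at hw
  obtain ⟨ℓ, u, hℓA, hℓp⟩ := geometric_hahn_banach_closed_point (convex_convexHull ℝ _)
    (hs.sdiff.isClosed_convexHull ℝ) hpA
  refine ⟨ℓ, fun w hw hwp => ?_⟩
  rw [hs_eq, convexHull_insert hA, convexJoin_singleton_left, mem_iUnion₂] at hw
  obtain ⟨z, hz, a, b, ha, hb, hab, rfl⟩ := hw
  have hb₀ : 0 < b := hb.lt_of_ne fun h => hwp (by simp [← h, (by linarith : a = 1)])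
  rw [map_add, map_smul, map_smul, smul_eq_mul, smul_eq_mul]
  calc a * ℓ p + b * ℓ z < a * ℓ p + b * ℓ p := by gcongr; exact (hℓA z hz).trans hℓp
    _ = ℓ p := by rw [← add_mul, hab, one_mul]

lemma isFaceOf_setOf_map_eq_of_forall_lt {n k : ℕ} {Q : Set (Fin n → ℝ)}
    (π : (Fin n → ℝ) →ₗ[ℝ] (Fin k → ℝ)) {p : Fin k → ℝ} (hp : p ∈ π '' Q)
    (ℓ : (Fin k → ℝ) →ₗ[ℝ] ℝ) (hℓ : ∀ w ∈ π '' Q, w ≠ p → ℓ w < ℓ p) :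
    IsFaceOf Q {x ∈ Q | π x = p} := by
  classical
  obtain ⟨x₀, hx₀, rfl⟩ := hp
  set c := (dotProductEquiv ℝ (Fin n)).symm (ℓ ∘ₗ π)
  have hc (x : Fin n → ℝ) : c ⬝ᵥ x = ℓ (π x) :=
    LinearMap.congr_fun ((dotProductEquiv ℝ (Fin n)).apply_symm_apply (ℓ ∘ₗ π)) x
  refine isFaceOf_iff.2 (.inr ⟨c, Set.ext fun x => and_congr_right fun hx => ?_⟩)
  simp only [hc]
  refine ⟨fun hxp y hy => ?_, fun h => by_contra fun hxp => ?_⟩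
  · rw [hxp]
    by_cases hyp : π y = π x₀
    · rw [hyp]
    · exact (hℓ _ ⟨y, hy, rfl⟩ hyp).le
  · exact (hℓ _ ⟨x, hx, rfl⟩ hxp).not_ge (h x₀ hx₀)

lemma IsPolytope.isFaceOf_setOf_map_eq {n k : ℕ} {Q : Set (Fin n → ℝ)} (hQ : IsPolytope Q)
    (π : (Fin n → ℝ) →ₗ[ℝ] (Fin k → ℝ)) {p : Fin k → ℝ} (hp : p ∈ (π '' Q).extremePoints ℝ) :
    IsFaceOf Q {x ∈ Q | π x = p} := by
  obtain ⟨s, rfl⟩ := hQ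
  have hP := π.image_convexHull ↑s
  rw [hP] at hp
  obtain ⟨ℓ, hℓ⟩ := exists_forall_lt_of_mem_extremePoints_convexHull (s.finite_toSet.image π) hp
  refine isFaceOf_setOf_map_eq_of_forall_lt π ?_ ℓ ?_ <;> rw [hP]
  exacts [hp.1, hℓ]

theorem IsPolytope.ncard_extremePoints_image_le {n k : ℕ} {Q : Set (Fin n → ℝ)}
    (hQ : IsPolytope Q) (π : (Fin n → ℝ) →ₗ[ℝ] (Fin k → ℝ)) :
    ((π '' Q).extremePoints ℝ).ncard ≤ 2 ^ {F | IsFacetOf Q F}.ncard := by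
  have hfin := hQ.finite_setOf_isFacetOf
  rw [← ncard_powerset _ hfin]
  -- a vertex is determined by the set of facets containing its fibre
  refine ncard_le_ncard_of_injOn (fun p => {T | IsFacetOf Q T ∧ {x ∈ Q | π x = p} ⊆ T})
    (fun p _ => sep_subset _ _) (fun p hp q hq hpq => ?_) hfin.powerset
  obtain ⟨x, hx, rfl⟩ := hp.1
  obtain ⟨y, hy, rfl⟩ := hq.1
  have hxy := (hQ.isFaceOf_setOf_map_eq π hp).eq_of_forall_isFacetOf_subset_iff hQ ⟨x, hx, rfl⟩
    (hQ.isFaceOf_setOf_map_eq π hq) ⟨y, hy, rfl⟩ fun T hT => by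
      simpa [hT] using Set.ext_iff.1 hpq T
  exact (hxy ▸ ⟨hx, rfl⟩ : x ∈ {z ∈ Q | π z = π y}).2

theorem stmt0_general {n k : ℕ} (P : Set (Fin k → ℝ)) (Q : Set (Fin n → ℝ))
    (hQ : IsPolytope Q)
    (π : (Fin n → ℝ) →ₗ[ℝ] (Fin k → ℝ)) (hπ : P = ⇑π '' Q)
    (d f : ℕ)
    (hd : (Set.extremePoints ℝ P).ncard = d)
    (hf : {F : Set (Fin n → ℝ) | IsFacetOf Q F}.ncard = f) :
    Real.logb 2 d ≤ f := by
  have hdf : d ≤ 2 ^ f := hd ▸ hf ▸ hπ ▸ hQ.ncard_extremePoints_image_le π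
  rcases d.eq_zero_or_pos with rfl | hd₀
  · simp
  calc Real.logb 2 d ≤ Real.logb 2 (2 ^ f) :=
        Real.logb_le_logb_of_le one_lt_two (by positivity) (by exact_mod_cast hdf)
    _ = f := by rw [Real.logb_pow, Real.logb_self_eq_one one_lt_two, mul_one]

/-- **Goemans' lower bound**: if a polytope `P` with `d` vertices is the image
under a linear map `π` of a polytope `Q` with `f` facets, then `f ≥ log₂ d`. -/
theorem stmt0 {n k : ℕ} (P : Set (Fin k → ℝ)) (Q : Set (Fin n → ℝ))
    (hP : IsPolytope P) (hQ : IsPolytope Q)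
    (π : (Fin n → ℝ) →ₗ[ℝ] (Fin k → ℝ)) (hπ : P = ⇑π '' Q)
    (d f : ℕ)
    (hd : (Set.extremePoints ℝ P).ncard = d)
    (hf : {F : Set (Fin n → ℝ) | IsFacetOf Q F}.ncard = f) :
    Real.logb 2 d ≤ f :=
  stmt0_general P Q hQ π hπ d f hd hf
end

section
/- If a semialgebraic set W ⊆ ℝ^N has positive measure under the standard Gaussian measure, then W has nonempty interior. -/
/-!
The zero set of a nonzero polynomial is null for every product of atomless σ-finite measures on
`ℝ`: by induction on the number of variables and Fubini along the first coordinate, away from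
the (inductively null) zero set of the leading coefficient in that variable, every slice is a
finite set. Hence a basic semialgebraic piece of positive measure has the zero polynomial as its
equation, so it is cut out by strict inequalities alone and is open.
-/

open Set MeasureTheory ProbabilityTheory MvPolynomial

/-- A basic semialgebraic subset of `ℝ^ι`: solutions of one polynomial equation
together with finitely many strict polynomial inequalities. -/
def IsBasicSemialgebraic {ι : Type} [Fintype ι] (s : Set (ι → ℝ)) : Prop :=
  ∃ (p : MvPolynomial ι ℝ) (Q : Finset (MvPolynomial ι ℝ)),
    s = {x | eval x p = 0 ∧ ∀ q ∈ Q, 0 < eval x q}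

/-- A semialgebraic set: a finite union of basic semialgebraic sets. -/
def IsSemialgebraic {ι : Type} [Fintype ι] (W : Set (ι → ℝ)) : Prop :=
  ∃ (k : ℕ) (f : Fin k → Set (ι → ℝ)),
    (∀ i, IsBasicSemialgebraic (f i)) ∧ W = ⋃ i, f i

namespace MvPolynomial

theorem measurableSet_setOf_eval_eq_zero {ι : Type*} [Fintype ι] (p : MvPolynomial ι ℝ) :
    MeasurableSet {x : ι → ℝ | eval x p = 0} :=
  (isClosed_eq (continuous_eval p) continuous_const).measurableSet

theorem finite_setOf_eval_cons_eq_zero {n : ℕ} {p : MvPolynomial (Fin (n + 1)) ℝ}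
    {s : Fin n → ℝ} (hs : eval s (finSuccEquiv ℝ n p).leadingCoeff ≠ 0) :
    {y : ℝ | eval (Fin.cons y s) p = 0}.Finite := by
  have hne : (finSuccEquiv ℝ n p).map (eval s) ≠ 0 := fun h => hs <| by
    simpa using congrArg (Polynomial.coeff · (finSuccEquiv ℝ n p).natDegree) h
  simpa only [Polynomial.IsRoot.def, eval_eq_eval_mv_eval'] using
    Polynomial.finite_setOfPred_isRoot hne

theorem measure_pi_setOf_eval_eq_zero {n : ℕ} (μ : Fin n → Measure ℝ)
    [∀ i, SigmaFinite (μ i)] [∀ i, NullSingletonClass (μ i)]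
    {p : MvPolynomial (Fin n) ℝ} (hp : p ≠ 0) :
    Measure.pi μ {x | eval x p = 0} = 0 := by
  induction n with
  | zero =>
    obtain ⟨c, rfl⟩ := C_surjective (Fin 0) p
    have hc : c ≠ 0 := by rintro rfl; exact hp C_0
    simp [hc]
  | succ n ih =>
    have hlead : (finSuccEquiv ℝ n p).leadingCoeff ≠ 0 :=
      Polynomial.leadingCoeff_ne_zero.mpr <|
        (map_ne_zero_iff _ (finSuccEquiv ℝ n).injective).mpr hp
    set Z : Set (ℝ × (Fin n → ℝ)) := {z | eval (Fin.cons z.1 z.2) p = 0}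
    have hZ : MeasurableSet Z :=
      measurableSet_setOf_eval_eq_zero p |>.preimage (by fun_prop)
    have hslices : ∀ᵐ s ∂Measure.pi (fun j => μ j.succ),
        μ 0 ((fun y => (y, s)) ⁻¹' Z) = 0 := by
      filter_upwards [measure_eq_zero_iff_ae_notMem.mp (ih (fun j => μ j.succ) hlead)] with s hs
      exact (finite_setOf_eval_cons_eq_zero hs).measure_zero _
    have e := measurePreserving_piFinSuccAbove μ 0
    simp only [Fin.succAbove_zero] at e
    have hpre : {x : Fin (n + 1) → ℝ | eval x p = 0} =
        MeasurableEquiv.piFinSuccAbove _ 0 ⁻¹' Z := by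
      ext x
      simp [Z, MeasurableEquiv.piFinSuccAbove, Fin.consEquiv, Fin.cons_self_tail]
    rw [hpre, e.measure_preimage hZ.nullMeasurableSet, Measure.prod_apply_symm hZ,
      lintegral_congr_ae hslices, lintegral_zero]

end MvPolynomial

theorem IsBasicSemialgebraic.isOpen_or_subset_zeroSet {ι : Type} [Fintype ι] {s : Set (ι → ℝ)}
    (hs : IsBasicSemialgebraic s) :
    IsOpen s ∨ ∃ p : MvPolynomial ι ℝ, p ≠ 0 ∧ s ⊆ {x | eval x p = 0} := by
  obtain ⟨p, Q, rfl⟩ := hs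
  rcases eq_or_ne p 0 with rfl | hp
  · left
    simp only [map_zero, true_and, ofPred_forall]
    exact isOpen_biInter_finset fun q _ => isOpen_lt continuous_const (continuous_eval q)
  · exact Or.inr ⟨p, hp, fun x hx => hx.1⟩

theorem IsBasicSemialgebraic.isOpen_of_measure_ne_zero {n : ℕ} (μ : Fin n → Measure ℝ)
    [∀ i, SigmaFinite (μ i)] [∀ i, NullSingletonClass (μ i)] {s : Set (Fin n → ℝ)}
    (hs : IsBasicSemialgebraic s) (hμs : Measure.pi μ s ≠ 0) : IsOpen s := by
  refine hs.isOpen_or_subset_zeroSet.resolve_right ?_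
  rintro ⟨p, hp, hsub⟩
  exact hμs (measure_mono_null hsub (measure_pi_setOf_eval_eq_zero μ hp))

theorem IsSemialgebraic.interior_nonempty_of_measure_ne_zero {n : ℕ} (μ : Fin n → Measure ℝ)
    [∀ i, SigmaFinite (μ i)] [∀ i, NullSingletonClass (μ i)] {W : Set (Fin n → ℝ)}
    (hW : IsSemialgebraic W) (hμW : Measure.pi μ W ≠ 0) : (interior W).Nonempty := by
  obtain ⟨k, f, hf, rfl⟩ := hW
  obtain ⟨i, hi⟩ : ∃ i, Measure.pi μ (f i) ≠ 0 := by
    by_contra! h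
    exact hμW (measure_iUnion_null h)
  have hopen : IsOpen (f i) := (hf i).isOpen_of_measure_ne_zero μ hi
  exact (nonempty_of_measure_ne_zero hi).mono <|
    hopen.interior_eq ▸ interior_mono (subset_iUnion f i)

/-- If a semialgebraic set `W ⊆ ℝᴺ` has positive measure under the standard
Gaussian measure, then `W` has nonempty interior. -/
theorem stmt9 {N : ℕ} (W : Set (Fin N → ℝ)) (hW : IsSemialgebraic W)
    (hpos : 0 < Measure.pi (fun _ : Fin N => gaussianReal 0 1) W) :
    (interior W).Nonempty :=
  have := nullSingletonClass_gaussianReal (μ := 0) one_ne_zero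
  hW.interior_nonempty_of_measure_ne_zero _ hpos.ne'
end

section
/- For integers 0 ≤ r < m, the product identity ∏_{i=0}^{m-r-1} C(m+i, m-r-i)/C(2i+1, i) = ∏_{0 ≤ i ≤ j ≤ m-r-1} (r+i+j+1)/(i+j+1) holds. -/
/-!
Put `n = m - r` and write both sides through factorials: the `i`-th factor on the left is the
`i`-th factor on the right times `i! (i+1)! (n+i)! / ((n-i)! (2i)! (2i+1)!)`, which does not depend
on `r`. The product of these correction factors is `1`: reflecting `i ↦ n-1-i` matches
`∏ (i+1)!` with `∏ (n-i)!`, and `∏_{i<n} i! · ∏_{i<n} (n+i)!` and `∏_{i<n} (2i)! (2i+1)!`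
are both `∏_{k<2n} k!`.
-/

open Finset Nat

theorem Finset.prod_range_two_mul {M : Type*} [CommMonoid M] (f : ℕ → M) (n : ℕ) :
    ∏ k ∈ range (2 * n), f k = ∏ i ∈ range n, f (2 * i) * f (2 * i + 1) := by
  induction n with
  | zero => simp
  | succ n ih => rw [Nat.mul_succ, prod_range_succ, prod_range_succ, ih, prod_range_succ,
      mul_assoc]

theorem Nat.prod_range_factorial_mul_prod_range_add_factorial (n : ℕ) :
    (∏ i ∈ range n, i !) * ∏ i ∈ range n, (n + i)! =
      ∏ i ∈ range n, (2 * i)! * (2 * i + 1)! := by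
  rw [← prod_range_add, ← two_mul, prod_range_two_mul]

theorem Nat.prod_range_factorial_ratio_eq_one (n : ℕ) :
    ∏ i ∈ range n, ((i ! * (i + 1)! * (n + i)! : ℚ) / ((n - i)! * (2 * i)! * (2 * i + 1)!)) =
      1 := by
  have reflect : ∏ i ∈ range n, (i + 1)! = ∏ i ∈ range n, (n - i)! := by
    rw [← prod_range_reflect]
    exact prod_congr rfl fun i hi => by have := mem_range.1 hi; congr 1; omega
  have key : ∏ i ∈ range n, i ! * (i + 1)! * (n + i)! =
      ∏ i ∈ range n, (n - i)! * (2 * i)! * (2 * i + 1)! := by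
    simp only [prod_mul_distrib]
    rw [← reflect, mul_right_comm, prod_range_factorial_mul_prod_range_add_factorial,
      prod_mul_distrib]
    ring
  rw [prod_div_distrib, div_eq_one_iff_eq (by positivity)]
  exact_mod_cast key

theorem Nat.prod_Ico_add_eq_ascFactorial (a i n : ℕ) :
    ∏ j ∈ Ico i n, (a + i + j + 1) = (a + 2 * i + 1).ascFactorial (n - i) := by
  rw [prod_Ico_eq_prod_range, ascFactorial_eq_prod_range]
  exact prod_congr rfl fun k _ => by ring

theorem Nat.prod_Ico_add_eq_factorial_div (a i n : ℕ) (h : i ≤ n) :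
    ∏ j ∈ Ico i n, (a + i + j + 1 : ℚ) = (a + n + i)! / (a + 2 * i)! := by
  have := factorial_mul_ascFactorial (a + 2 * i) (n - i)
  rw [show a + 2 * i + (n - i) = a + n + i by omega] at this
  rw [eq_div_iff (by positivity), mul_comm]
  exact_mod_cast (congrArg _ (prod_Ico_add_eq_ascFactorial a i n)).trans this

theorem Nat.choose_div_choose_eq_prod_Ico_mul (r n i : ℕ) (h : i ≤ n) :
    ((r + n + i).choose (n - i) / (2 * i + 1).choose i : ℚ) =
      (∏ j ∈ Ico i n, ((r + i + j + 1 : ℚ) / (i + j + 1))) *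
        ((i ! * (i + 1)! * (n + i)! : ℚ) / ((n - i)! * (2 * i)! * (2 * i + 1)!)) := by
  have denominator : ∏ j ∈ Ico i n, (i + j + 1 : ℚ) = (n + i)! / (2 * i)! := by
    simpa using prod_Ico_add_eq_factorial_div 0 i n h
  rw [cast_choose ℚ (by omega), cast_choose ℚ (by omega), prod_div_distrib,
    prod_Ico_add_eq_factorial_div r i n h, denominator,
    show r + n + i - (n - i) = r + 2 * i by omega, show 2 * i + 1 - i = i + 1 by omega]
  field_simp

theorem prod_choose_div_choose_eq_prod_prod (r n : ℕ) :
    ∏ i ∈ range n, ((r + n + i).choose (n - i) / (2 * i + 1).choose i : ℚ) =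
      ∏ i ∈ range n, ∏ j ∈ Ico i n, ((r + i + j + 1 : ℚ) / (i + j + 1)) := by
  rw [prod_congr rfl fun i hi => choose_div_choose_eq_prod_Ico_mul r n i (mem_range.1 hi).le,
    prod_mul_distrib, prod_range_factorial_ratio_eq_one, mul_one]

theorem stmt11_general (m r : ℕ) :
    ∏ i ∈ Finset.range (m - r),
        ((Nat.choose (m + i) (m - r - i) : ℚ) / (Nat.choose (2 * i + 1) i : ℚ)) =
      ∏ i ∈ Finset.range (m - r), ∏ j ∈ Finset.Icc i (m - r - 1),
        ((r + i + j + 1 : ℚ) / (i + j + 1 : ℚ)) := by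
  rcases le_total r m with hrm | hmr
  · obtain ⟨n, rfl⟩ := exists_add_of_le hrm
    rw [Nat.add_sub_cancel_left]
    convert prod_choose_div_choose_eq_prod_prod r n using 3 with i hi
    rw [Icc_sub_one_right_eq_Ico_of_not_isMin (by simpa using (mem_range.1 hi).ne_bot)]
  · simp [Nat.sub_eq_zero_of_le hmr]

/-- For integers `0 ≤ r < m`, the product identity
`∏_{i=0}^{m-r-1} C(m+i, m-r-i)/C(2i+1, i) = ∏_{0 ≤ i ≤ j ≤ m-r-1} (r+i+j+1)/(i+j+1)`. -/
theorem stmt11 (m r : ℕ) (hrm : r < m) :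
    ∏ i ∈ Finset.range (m - r),
        ((Nat.choose (m + i) (m - r - i) : ℚ) / (Nat.choose (2 * i + 1) i : ℚ)) =
      ∏ i ∈ Finset.range (m - r), ∏ j ∈ Finset.Icc i (m - r - 1),
        ((r + i + j + 1 : ℚ) / (i + j + 1 : ℚ)) :=
  stmt11_general m r
end
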